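/- Let K be a positive semidefinite bounded linear operator on H and let F = (f_1,…,f_N) be a Parseval K-frame for H which is linearly connected. Then there exists a K-dual G = (g_1,…,g_N) of F with ⟨f_i, g_i⟩ = tr(K)/N for every i; consequently, the infimum of max_{1≤i≤N} |⟨f_i, g'_i⟩| over all K-duals G' of F equals tr(K)/N and is attained. -/

import Mathlib

/-!
Every `K`-dual `G` of `F` satisfies `∑ i, ⟨f_i, g_i⟩ = tr K`, because `K = ∑ i, g_i ⊗ f_i` is a
sum of rank-one maps. This gives the lower bound `tr K / N ≤ max_i |⟨f_i, g_i⟩|` at once, and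
shows that the diagonal can only be constant if it equals `tr K / N`.

The diagonals `(⟨f_i, v_i⟩)_i` of the families `v` with `∑ i, ⟨f, v_i⟩ f_i = 0` form a subspace
`V`, and adding such a `v` to a `K`-dual gives again a `K`-dual. A relation
`f_i = c f_j + ∑ c_k f_{ℓ_k}` with `{f_j, f_{ℓ_k}}` independent yields `e_i - e_j ∈ V`: test the
relation against a vector `u` with `⟨f_j, u⟩ = 1` and `⟨f_{ℓ_k}, u⟩ = 0`. Linear connectedness
thus puts every vector of coordinate sum zero into `V`, so the diagonal of any `K`-dual can be
shifted to the constant `tr K / N`. A first `K`-dual exists because the Parseval identity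
`‖(⟨f, f_i⟩)_i‖ = ‖K* f‖` forces `range K ⊆ span F`.
-/

open scoped ComplexOrder

local notation "⟪" x ", " y "⟫" => @inner ℂ _ _ x y

section

open scoped InnerProductSpace

variable {𝕜 H ι : Type*} [RCLike 𝕜] [NormedAddCommGroup H] [InnerProductSpace 𝕜 H] [Fintype ι]

def IsKDual (K : H →ₗ[𝕜] H) (F G : ι → H) : Prop :=
  ∀ f, K f = ∑ i, ⟪G i, f⟫_𝕜 • F i

namespace IsKDual

variable {K K' : H →ₗ[𝕜] H} {F G G' : ι → H}

theorem add (hG : IsKDual K F G) (hG' : IsKDual K' F G') : IsKDual (K + K') F (G + G') := by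
  intro f
  simp only [LinearMap.add_apply, hG f, hG' f, Pi.add_apply, inner_add_left, add_smul,
    Finset.sum_add_distrib]

theorem smul (hG : IsKDual K F G) (c : 𝕜) : IsKDual (starRingEnd 𝕜 c • K) F (c • G) := by
  intro f
  simp only [LinearMap.smul_apply, hG f, Finset.smul_sum, Pi.smul_apply, inner_smul_left,
    smul_smul]

theorem trace_eq [FiniteDimensional 𝕜 H] (hG : IsKDual K F G) :
    LinearMap.trace 𝕜 H K = ∑ i, ⟪G i, F i⟫_𝕜 := by
  have hK : K = ∑ i, (InnerProductSpace.rankOne 𝕜 (F i) (G i) : H →ₗ[𝕜] H) := by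
    ext f
    simp [hG f]
  simp [hK, InnerProductSpace.trace_rankOne]

theorem re_trace_div_card_le_iSup [FiniteDimensional 𝕜 H] [Nonempty ι] (hG : IsKDual K F G) :
    RCLike.re (LinearMap.trace 𝕜 H K) / Fintype.card ι ≤ ⨆ i, ‖⟪G i, F i⟫_𝕜‖ := by
  have hle : ∀ i, ‖⟪G i, F i⟫_𝕜‖ ≤ ⨆ i, ‖⟪G i, F i⟫_𝕜‖ :=
    le_ciSup (Set.finite_range _).bddAbove
  rw [div_le_iff₀ (Nat.cast_pos.mpr Fintype.card_pos), hG.trace_eq, map_sum]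
  calc ∑ i, RCLike.re ⟪G i, F i⟫_𝕜 ≤ ∑ i, ‖⟪G i, F i⟫_𝕜‖ :=
        Finset.sum_le_sum fun i _ => RCLike.re_le_norm _
    _ ≤ ∑ _i : ι, ⨆ i, ‖⟪G i, F i⟫_𝕜‖ := Finset.sum_le_sum fun i _ => hle i
    _ = _ := by simp [mul_comm]

end IsKDual

theorem range_le_span_of_parseval [FiniteDimensional 𝕜 H] [CompleteSpace H] (K : H →L[𝕜] H)
    {F : ι → H} (hF : ∀ f, ∑ i, ‖⟪F i, f⟫_𝕜‖ ^ 2 = ‖ContinuousLinearMap.adjoint K f‖ ^ 2) :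
    K.range ≤ Submodule.span 𝕜 (Set.range F) := by
  rw [← Submodule.orthogonal_le_orthogonal_iff, ContinuousLinearMap.orthogonal_range]
  intro x hx
  have hFx : ∀ i, ⟪F i, x⟫_𝕜 = 0 := fun i =>
    Submodule.inner_right_of_mem_orthogonal (Submodule.subset_span (Set.mem_range_self i)) hx
  have hKx := hF x
  simp only [hFx, norm_zero, ne_eq, OfNat.ofNat_ne_zero, not_false_eq_true, zero_pow,
    Finset.sum_const_zero] at hKx
  exact norm_eq_zero.mp (pow_eq_zero_iff two_ne_zero |>.mp hKx.symm)

theorem exists_isKDual_of_range_le_span [FiniteDimensional 𝕜 H] {K : H →ₗ[𝕜] H} {F : ι → H}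
    (h : LinearMap.range K ≤ Submodule.span 𝕜 (Set.range F)) : ∃ G, IsKDual K F G := by
  have := FiniteDimensional.complete 𝕜 H
  set T := Fintype.linearCombination 𝕜 F
  rw [← Fintype.range_linearCombination] at h
  obtain ⟨B, hB⟩ := Module.projective_lifting_property T.rangeRestrict
    (K.codRestrict (LinearMap.range T) fun f => h (LinearMap.mem_range_self K f))
    T.surjective_rangeRestrict
  refine ⟨fun i => (InnerProductSpace.toDual 𝕜 H).symm
    (LinearMap.toContinuousLinearMap (LinearMap.proj i ∘ₗ B)), fun f => ?_⟩
  have hTB : T (B f) = K f := congr_arg Subtype.val (LinearMap.congr_fun hB f)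
  simp [InnerProductSpace.toDual_symm_apply, ← hTB, T, Fintype.linearCombination_apply]

variable (𝕜) in
def nullDualDiagonals (F : ι → H) : Submodule 𝕜 (ι → 𝕜) where
  carrier := {x | ∃ v, IsKDual (0 : H →ₗ[𝕜] H) F v ∧ (fun i => ⟪v i, F i⟫_𝕜) = x}
  zero_mem' := ⟨0, fun f => by simp, funext fun _ => inner_zero_left _⟩
  add_mem' := by
    rintro _ _ ⟨v, hv, rfl⟩ ⟨w, hw, rfl⟩
    exact ⟨v + w, by simpa using hv.add hw, funext fun i => inner_add_left _ _ _⟩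
  smul_mem' := by
    rintro c _ ⟨v, hv, rfl⟩
    refine ⟨starRingEnd 𝕜 c • v, by simpa using hv.smul (starRingEnd 𝕜 c), funext fun i => ?_⟩
    simp [inner_smul_left]

theorem IsKDual.exists_inner_self_eq_add {K : H →ₗ[𝕜] H} {F G : ι → H} (hG : IsKDual K F G)
    {x : ι → 𝕜} (hx : x ∈ nullDualDiagonals 𝕜 F) :
    ∃ G', IsKDual K F G' ∧ ∀ i, ⟪G' i, F i⟫_𝕜 = ⟪G i, F i⟫_𝕜 + x i := by
  obtain ⟨v, hv, rfl⟩ := hx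
  exact ⟨G + v, by simpa using hG.add hv, fun i => inner_add_left _ _ _⟩

theorem mul_inner_mem_nullDualDiagonals {F : ι → H} {a : ι → 𝕜} (ha : ∑ i, a i • F i = 0)
    (v : H) : (fun i => a i * ⟪v, F i⟫_𝕜) ∈ nullDualDiagonals 𝕜 F := by
  refine ⟨fun i => starRingEnd 𝕜 (a i) • v, fun f => ?_,
    funext fun i => by simp [inner_smul_left]⟩
  simp [inner_smul_left, mul_comm _ ⟪v, f⟫_𝕜, mul_smul, ← Finset.smul_sum, ha]

theorem LinearIndependent.exists_inner_eq [FiniteDimensional 𝕜 H] {w : ι → H}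
    (hw : LinearIndependent 𝕜 w) (t : ι → 𝕜) : ∃ v, ∀ i, ⟪v, w i⟫_𝕜 = t i := by
  classical
  have := FiniteDimensional.complete 𝕜 H
  obtain ⟨L, hL⟩ := (Fintype.linearCombination 𝕜 w).exists_leftInverse_of_injective
    (LinearMap.ker_eq_bot.mpr (linearIndependent_iff_injective_fintypeLinearCombination.mp hw))
  let φ : H →ₗ[𝕜] 𝕜 := Fintype.linearCombination 𝕜 t ∘ₗ L
  refine ⟨(InnerProductSpace.toDual 𝕜 H).symm (LinearMap.toContinuousLinearMap φ), fun i => ?_⟩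
  have : L (w i) = Pi.single i 1 := by
    simpa using LinearMap.congr_fun hL (Pi.single i 1)
  simp [InnerProductSpace.toDual_symm_apply, φ, this]

theorem single_sub_single_mem_nullDualDiagonals [FiniteDimensional 𝕜 H] [DecidableEq ι]
    {F : ι → H} {i j : ι} {m : ℕ} {ℓ : Fin m → ι} {c : 𝕜} {d : Fin m → 𝕜} (hc : c ≠ 0)
    (hrel : F i = c • F j + ∑ k, d k • F (ℓ k))
    (hind : LinearIndependent 𝕜 (Fin.cons (F j) (fun k => F (ℓ k)) : Fin (m + 1) → H)) :
    Pi.single i 1 - Pi.single j 1 ∈ nullDualDiagonals 𝕜 F := by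
  obtain ⟨v, hv⟩ := hind.exists_inner_eq (Fin.cons 1 0)
  have hvj : ⟪v, F j⟫_𝕜 = 1 := hv 0
  have hvℓ : ∀ k, ⟪v, F (ℓ k)⟫_𝕜 = 0 := fun k => hv k.succ
  have hvi : ⟪v, F i⟫_𝕜 = c := by
    simp [hrel, inner_add_right, inner_smul_right, inner_sum, hvj, hvℓ]
  set a : ι → 𝕜 := Pi.single i 1 - Pi.single j c - ∑ k, Pi.single (ℓ k) (d k)
  have ha : ∑ p, a p • F p = 0 := by
    rw [← Fintype.linearCombination_apply]
    simp [a, Fintype.linearCombination_apply_single, hrel]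
  have hmem := mul_inner_mem_nullDualDiagonals ha v
  -- the `ℓ`-part of `a` is killed by `hvℓ`, whatever the overlaps among `i`, `j` and the `ℓ k`
  have hdiag : (fun p => a p * ⟪v, F p⟫_𝕜) = c • (Pi.single i 1 - Pi.single j 1) := by
    change a * (fun p => ⟪v, F p⟫_𝕜) = _
    simp only [a, sub_mul, Finset.sum_mul, ← Pi.single_mul_left, hvi, hvj, hvℓ]
    simp [smul_sub, ← Pi.single_smul]
  rw [hdiag] at hmem
  simpa [hc] using (nullDualDiagonals 𝕜 F).smul_mem c⁻¹ hmem

theorem Submodule.mem_of_single_sub_single_mem {R : Type*} [CommRing R] [DecidableEq ι]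
    (p : Submodule R (ι → R)) (hp : ∀ i j, i ≠ j → Pi.single i 1 - Pi.single j 1 ∈ p)
    {x : ι → R} (hx : ∑ i, x i = 0) : x ∈ p := by
  cases isEmpty_or_nonempty ι with
  | inl _ => simp [Subsingleton.elim x 0]
  | inr h =>
    obtain ⟨j⟩ := h
    have hdiff : ∀ i, Pi.single i 1 - Pi.single j 1 ∈ p := fun i => by
      rcases eq_or_ne i j with rfl | hij
      · simp
      · exact hp i j hij
    have hx' : x = ∑ i, x i • (Pi.single i 1 - Pi.single j 1) := by
      simp only [smul_sub, Finset.sum_sub_distrib, ← Finset.sum_smul, hx, zero_smul, sub_zero]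
      exact pi_eq_sum_univ' x
    rw [hx']
    exact Submodule.sum_mem _ fun i _ => p.smul_mem _ (hdiff i)

theorem IsKDual.exists_inner_self_eq_trace_div [FiniteDimensional 𝕜 H] [DecidableEq ι]
    [Nonempty ι] {K : H →ₗ[𝕜] H} {F G : ι → H} (hG : IsKDual K F G)
    (hF : ∀ i j, i ≠ j → Pi.single i 1 - Pi.single j 1 ∈ nullDualDiagonals 𝕜 F) :
    ∃ G', IsKDual K F G' ∧
      ∀ i, ⟪G' i, F i⟫_𝕜 = LinearMap.trace 𝕜 H K / Fintype.card ι := by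
  set x : ι → 𝕜 := fun i => LinearMap.trace 𝕜 H K / Fintype.card ι - ⟪G i, F i⟫_𝕜
  have hx : ∑ i, x i = 0 := by
    have hcard : (Fintype.card ι : 𝕜) ≠ 0 := Nat.cast_ne_zero.mpr Fintype.card_ne_zero
    simp [x, Finset.sum_sub_distrib, ← hG.trace_eq, mul_div_cancel₀ _ hcard]
  obtain ⟨G', hG', hdiag⟩ := hG.exists_inner_self_eq_add (Submodule.mem_of_single_sub_single_mem _ hF hx)
  exact ⟨G', hG', fun i => by simp [hdiag, x]⟩

theorem LinearMap.isPositive_of_inner_nonneg {E : Type*} [NormedAddCommGroup E]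
    [InnerProductSpace ℂ E] {T : E →ₗ[ℂ] E} (hT : ∀ x, 0 ≤ ⟪T x, x⟫_ℂ) : T.IsPositive :=
  (LinearMap.isPositive_iff T).mpr
    ⟨(T.isSymmetric_iff_inner_map_self_real).mpr fun x => (hT x).isSelfAdjoint, hT⟩

end

theorem stmt15_general
    {H : Type*} [NormedAddCommGroup H] [InnerProductSpace ℂ H] [FiniteDimensional ℂ H]
    {N : ℕ} (hN : 1 ≤ N)
    (K : H →L[ℂ] H) (hK : ∀ f : H, 0 ≤ ⟪K f, f⟫)
    (F : Fin N → H)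
    (hParseval : ∀ f : H,
      ∑ i, ‖⟪F i, f⟫‖ ^ 2 = ‖ContinuousLinearMap.adjoint K f‖ ^ 2)
    (hconn : ∀ i j : Fin N, i ≠ j →
      ∃ (m : ℕ) (ℓ : Fin m → Fin N) (c : ℂ) (d : Fin m → ℂ),
        c ≠ 0 ∧ (∀ k, d k ≠ 0) ∧
        F i = c • F j + ∑ k, d k • F (ℓ k) ∧
        LinearIndependent ℂ (Fin.cons (F j) (fun k => F (ℓ k)) : Fin (m + 1) → H)) :
    ∃ G : Fin N → H,
      (∀ f : H, K f = ∑ i, ⟪G i, f⟫ • F i) ∧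
      (∀ i, ⟪G i, F i⟫ = LinearMap.trace ℂ H (K : H →ₗ[ℂ] H) / N) ∧
      (⨆ i, ‖⟪G i, F i⟫‖) = (LinearMap.trace ℂ H (K : H →ₗ[ℂ] H)).re / N ∧
      (∀ G' : Fin N → H, (∀ f : H, K f = ∑ i, ⟪G' i, f⟫ • F i) →
        (LinearMap.trace ℂ H (K : H →ₗ[ℂ] H)).re / N ≤ ⨆ i, ‖⟪G' i, F i⟫‖) := by
  have : Nonempty (Fin N) := ⟨⟨0, hN⟩⟩
  have htr : 0 ≤ LinearMap.trace ℂ H (K : H →ₗ[ℂ] H) :=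
    (LinearMap.isPositive_of_inner_nonneg hK).trace_nonneg
  obtain ⟨G₀, hG₀⟩ := exists_isKDual_of_range_le_span (range_le_span_of_parseval K hParseval)
  have hdiff : ∀ i j, i ≠ j → Pi.single i 1 - Pi.single j 1 ∈ nullDualDiagonals ℂ F := by
    intro i j hij
    obtain ⟨m, ℓ, c, d, hc, -, hrel, hind⟩ := hconn i j hij
    exact single_sub_single_mem_nullDualDiagonals hc hrel hind
  obtain ⟨G, hG, hdiag⟩ := hG₀.exists_inner_self_eq_trace_div hdiff
  have hnorm : ∀ i, ‖⟪G i, F i⟫‖ = (LinearMap.trace ℂ H (K : H →ₗ[ℂ] H)).re / N := by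
    intro i
    rw [hdiag, norm_div, Complex.norm_natCast, Fintype.card_fin]
    congr 1
    simpa using congr_arg Complex.re (Complex.norm_of_nonneg' htr)
  refine ⟨G, hG, by simpa using hdiag, by simp [hnorm], fun G' hG' => ?_⟩
  simpa using IsKDual.re_trace_div_card_le_iSup (K := (K : H →ₗ[ℂ] H)) hG'

/-- Let `K` be positive semidefinite and `F` a linearly connected Parseval
`K`-frame.  Then there is a `K`-dual `G` of `F` with `⟨f_i, g_i⟩ = tr(K)/N` for all `i`;
consequently the infimum of `max_i |⟨f_i, g'_i⟩|` over all `K`-duals `G'` of `F` equals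
`tr(K)/N` and is attained.
(The paper's `⟨f, g⟩` is linear in the first slot, i.e. Mathlib's `⟪g, f⟫`; a pair `f_i, f_j`
(`i ≠ j`) is linearly `F`-connected when `f_i = c f_j + ∑_k c_k f_{ℓ_k}` with all scalars
nonzero and `{f_j, f_{ℓ_1}, …, f_{ℓ_m}}` linearly independent.) -/
theorem stmt15
    {H : Type*} [NormedAddCommGroup H] [InnerProductSpace ℂ H] [FiniteDimensional ℂ H]
    (hdim : 1 ≤ Module.finrank ℂ H)
    {N : ℕ} (hN : 1 ≤ N)
    (K : H →L[ℂ] H) (hK : ∀ f : H, 0 ≤ ⟪K f, f⟫)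
    (F : Fin N → H)
    (hParseval : ∀ f : H,
      ∑ i, ‖⟪F i, f⟫‖ ^ 2 = ‖ContinuousLinearMap.adjoint K f‖ ^ 2)
    (hconn : ∀ i j : Fin N, i ≠ j →
      ∃ (m : ℕ) (ℓ : Fin m → Fin N) (c : ℂ) (d : Fin m → ℂ),
        c ≠ 0 ∧ (∀ k, d k ≠ 0) ∧
        F i = c • F j + ∑ k, d k • F (ℓ k) ∧
        LinearIndependent ℂ (Fin.cons (F j) (fun k => F (ℓ k)) : Fin (m + 1) → H)) :
    ∃ G : Fin N → H,
      (∀ f : H, K f = ∑ i, ⟪G i, f⟫ • F i) ∧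
      (∀ i, ⟪G i, F i⟫ = LinearMap.trace ℂ H (K : H →ₗ[ℂ] H) / N) ∧
      (⨆ i, ‖⟪G i, F i⟫‖) = (LinearMap.trace ℂ H (K : H →ₗ[ℂ] H)).re / N ∧
      (∀ G' : Fin N → H, (∀ f : H, K f = ∑ i, ⟪G' i, f⟫ • F i) →
        (LinearMap.trace ℂ H (K : H →ₗ[ℂ] H)).re / N ≤ ⨆ i, ‖⟪G' i, F i⟫‖) :=
  stmt15_general hN K hK F hParseval hconn
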